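/- Let 0<q<1 and let f be a real function on ℝ_q^+ such that f(q^{-n}) → 0 as n → ∞ (i.e. f vanishes at infinity along ℝ_q^+). Then V[D_q f] ≥ V[f], where V denotes the number of sign changes on ℝ_q^+. -/

import Mathlib

open Real Filter

noncomputable section

/-- The q-lattice `{q^n : n ∈ ℤ}`. -/
def qLat (q : ℝ) : Set ℝ := {x | ∃ n : ℤ, x = q ^ n}

/-- Jackson q-integral over (0,∞). -/
def qInt (q : ℝ) (f : ℝ → ℝ) : ℝ := (1 - q) * ∑' n : ℤ, q ^ n * f (q ^ n)

/-- The q-derivative. -/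
def qDeriv (q : ℝ) (f : ℝ → ℝ) (x : ℝ) : ℝ := (f x - f (q * x)) / ((1 - q) * x)

/-- Finite q-Pochhammer symbol `(a;p)_n`. -/
def qPoch (a p : ℝ) (n : ℕ) : ℝ := ∏ i ∈ Finset.range n, (1 - a * p ^ i)

/-- Infinite q-Pochhammer symbol `(a;p)_∞`. -/
def qPochInf (a p : ℝ) : ℝ := ∏' i : ℕ, (1 - a * p ^ i)

/-- Normalized Hahn–Exton q-Bessel function `j_ν(x,q²)`. -/
def jBessel (q ν x : ℝ) : ℝ :=
  ∑' n : ℕ, (-1 : ℝ) ^ n * q ^ (n * (n + 1)) * x ^ (2 * n) /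
    (qPoch (q ^ (2 * ν + 2)) (q ^ 2) n * qPoch (q ^ 2) (q ^ 2) n)

/-- Modified q-Bessel function `I_ν(x) = j_ν(ix,q²)`. -/
def iBessel (q ν x : ℝ) : ℝ :=
  ∑' n : ℕ, q ^ (n * (n + 1)) * x ^ (2 * n) /
    (qPoch (q ^ (2 * ν + 2)) (q ^ 2) n * qPoch (q ^ 2) (q ^ 2) n)

/-- The q-Bessel operator `Δ_{q,ν}`. -/
def qBesselOp (q ν : ℝ) (f : ℝ → ℝ) (x : ℝ) : ℝ :=
  (f (x / q) - (1 + q ^ (2 * ν)) * f x + q ^ (2 * ν) * f (q * x)) / x ^ 2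

/-- The constant `c_{q,ν}`. -/
def cqnu (q ν : ℝ) : ℝ :=
  (1 / (1 - q)) * qPochInf (q ^ (2 * ν + 2)) (q ^ 2) / qPochInf (q ^ 2) (q ^ 2)

/-- The q-Bessel Fourier transform `F_{q,ν}`. -/
def qFourier (q ν : ℝ) (f : ℝ → ℝ) (x : ℝ) : ℝ :=
  cqnu q ν * qInt q (fun t => f t * jBessel q ν (x * t) * t ^ (2 * ν + 1))

/-- The q-Bessel translation operator `T_{q,x}^ν`. -/
def qTrans (q ν : ℝ) (f : ℝ → ℝ) (x y : ℝ) : ℝ :=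
  cqnu q ν * qInt q (fun t =>
    qFourier q ν f t * jBessel q ν (y * t) * jBessel q ν (x * t) * t ^ (2 * ν + 1))

/-- The q-convolution product `f *_q g`. -/
def qConv (q ν : ℝ) (f g : ℝ → ℝ) (x : ℝ) : ℝ :=
  cqnu q ν * qInt q (fun y => qTrans q ν f x y * g y * y ^ (2 * ν + 1))

/-- The q-Macdonald function `K_ν`. -/
def qMacdonald (q ν x : ℝ) : ℝ :=
  cqnu q ν * qInt q (fun t => (1 + t ^ 2)⁻¹ * jBessel q ν (t * x) * t ^ (2 * ν + 1))

/-- The elementary kernel `g_a`. -/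
def gKer (q ν a x : ℝ) : ℝ :=
  cqnu q ν * qInt q (fun t => (1 + t ^ 2 / a ^ 2)⁻¹ * jBessel q ν (t * x) * t ^ (2 * ν + 1))

/-- `f` has at least `n` changes of sign on the q-lattice. -/
def HasSignChanges (q : ℝ) (f : ℝ → ℝ) (n : ℕ) : Prop :=
  ∃ t : Fin (n + 1) → ℝ, (∀ i, t i ∈ qLat q) ∧ StrictMono t ∧
    ∀ i : Fin n, f (t i.castSucc) * f (t i.succ) < 0

/-- `f` is bounded on the q-lattice and has limits at `0` and at `∞` along the lattice. -/
def Admissible (q : ℝ) (f : ℝ → ℝ) : Prop :=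
  (∃ M : ℝ, ∀ x ∈ qLat q, |f x| ≤ M) ∧
  (∃ L : ℝ, Tendsto (fun n : ℕ => f (q ^ (n : ℤ))) atTop (nhds L)) ∧
  (∃ L : ℝ, Tendsto (fun n : ℕ => f (q ^ (-n : ℤ))) atTop (nhds L))

/-- `K` is a variation diminishing `*_q`-kernel. -/
def IsVDKernel (q ν : ℝ) (K : ℝ → ℝ) : Prop :=
  Summable (fun n : ℤ => q ^ n * |K (q ^ n)| * ((q : ℝ) ^ n) ^ (2 * ν + 1)) ∧
  ∀ f : ℝ → ℝ, Admissible q f →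
    ∀ m : ℕ, HasSignChanges q (qConv q ν K f) m → HasSignChanges q f m

/-- The q-Wronskian `W_x(u,v)`. -/
def qWronskian (q : ℝ) (u v : ℝ → ℝ) (x : ℝ) : ℝ :=
  (1 / q ^ 2) * (1 - q) ^ 2 * (qDeriv q u (x / q) * v x - qDeriv q v (x / q) * u x)

/-! On the lattice, `(1 - q) x D_q f x = f x - f (q x)`, so for lattice points `a < b` the
increment `f b - f a` is a positive combination of the values of `D_q f` on the lattice points of
`(a, b]`. Hence if `f` changes sign at `t₀ < ⋯ < tₙ`, then `D_q f` takes the sign of `f tᵢ` somewhere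
in `(tᵢ₋₁, tᵢ]`; and since `f` vanishes at infinity, `f y - f tₙ` has the sign of `-f tₙ` for a
lattice point `y` far to the right, so `D_q f` takes that sign somewhere in `(tₙ, y]`. These `n + 1`
points carry `n` sign changes of `D_q f`. -/

lemma Int.exists_apply_succ_lt_of_lt {α : Type*} [LinearOrder α] {g : ℤ → α} {a b : ℤ}
    (hab : a ≤ b) (h : g b < g a) : ∃ k, a ≤ k ∧ k < b ∧ g (k + 1) < g k := by
  by_contra! hstep
  have hmono : MonotoneOn g (Set.Icc a b) :=
    monotoneOn_of_le_add_one Set.ordConnected_Icc fun k _ hk hk1 =>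
      hstep k hk.1 (by linarith [hk1.2])
  exact (hmono ⟨le_rfl, hab⟩ ⟨hab, le_rfl⟩ hab).not_gt h

lemma hasSignChanges_zero (q : ℝ) (g : ℝ → ℝ) : HasSignChanges q g 0 :=
  ⟨fun _ => 1, fun _ => ⟨0, (zpow_zero q).symm⟩, Fin.strictMono_iff_lt_succ.mpr Fin.elim0,
    Fin.elim0⟩

section

variable {q : ℝ} {f : ℝ → ℝ}

lemma qDeriv_zpow (hq0 : 0 < q) (k : ℤ) :
    qDeriv q f (q ^ k) = (f (q ^ k) - f (q ^ (k + 1))) / ((1 - q) * q ^ k) := by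
  rw [qDeriv, zpow_add_one₀ hq0.ne', mul_comm (q ^ k) q]

lemma exists_qDeriv_mul_pos_of_lt (hq0 : 0 < q) (hq1 : q < 1) {x y s : ℝ} (hx : x ∈ qLat q)
    (hy : y ∈ qLat q) (hxy : x < y) (h : 0 < (f y - f x) * s) :
    ∃ z ∈ qLat q, x < z ∧ z ≤ y ∧ 0 < qDeriv q f z * s := by
  obtain ⟨m, rfl⟩ := hx
  obtain ⟨n, rfl⟩ := hy
  have hnm : n < m := (zpow_lt_zpow_iff_right_of_lt_one₀ hq0 hq1).mp hxy
  obtain ⟨k, hnk, hkm, hstep⟩ := Int.exists_apply_succ_lt_of_lt (g := fun k => f (q ^ k) * s)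
    hnm.le (by linarith)
  refine ⟨q ^ k, ⟨k, rfl⟩, (zpow_lt_zpow_iff_right_of_lt_one₀ hq0 hq1).mpr hkm,
    (zpow_le_zpow_iff_right_of_lt_one₀ hq0 hq1).mpr hnk, ?_⟩
  rw [qDeriv_zpow hq0, div_mul_eq_mul_div, sub_mul]
  exact div_pos (by linarith) (mul_pos (by linarith) (zpow_pos hq0 k))

lemma exists_qLat_gt_abs_lt (hq0 : 0 < q) (hq1 : q < 1)
    (hinf : Tendsto (fun n : ℕ => f (q ^ (-n : ℤ))) atTop (nhds 0))
    (x : ℝ) {c : ℝ} (hc : 0 < c) : ∃ y ∈ qLat q, x < y ∧ |f y| < c := by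
  have hsmall : ∀ᶠ n : ℕ in atTop, |f (q ^ (-n : ℤ))| < c := by
    simpa using hinf.abs.eventually_lt_const (by simpa using hc)
  have hlarge : ∀ᶠ n : ℕ in atTop, x < q ^ (-n : ℤ) := by
    simp only [zpow_neg, zpow_natCast, ← inv_pow]
    exact (tendsto_pow_atTop_atTop_of_one_lt
      (one_lt_inv_iff₀.mpr ⟨hq0, hq1⟩)).eventually_gt_atTop x
  obtain ⟨n, hn, hxn⟩ := (hsmall.and hlarge).exists
  exact ⟨_, ⟨_, rfl⟩, hxn, hn⟩

lemma hasSignChanges_qDeriv_of_increments (hq0 : 0 < q) (hq1 : q < 1) {n : ℕ}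
    {T : Fin (n + 2) → ℝ} (hT : ∀ i, T i ∈ qLat q) (hTmono : StrictMono T)
    {σ : Fin (n + 1) → ℝ} (hσ : ∀ i : Fin n, σ i.castSucc * σ i.succ < 0)
    (hinc : ∀ i : Fin (n + 1), 0 < (f (T i.succ) - f (T i.castSucc)) * σ i) :
    HasSignChanges q (qDeriv q f) n := by
  choose z hz hTz hzT hzσ using fun i => exists_qDeriv_mul_pos_of_lt hq0 hq1 (f := f)
    (hT i.castSucc) (hT i.succ) (hTmono i.castSucc_lt_succ) (hinc i)
  refine ⟨z, hz, Fin.strictMono_iff_lt_succ.mpr fun i => ?_, fun i => ?_⟩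
  · calc z i.castSucc ≤ T i.castSucc.succ := hzT _
      _ = T i.succ.castSucc := by rw [Fin.succ_castSucc]
      _ < z i.succ := hTz _
  · have := mul_pos (hzσ i.castSucc) (hzσ i.succ)
    nlinarith [hσ i]

lemma hasSignChanges_qDeriv_of_abs_lt (hq0 : 0 < q) (hq1 : q < 1) {n : ℕ}
    {t : Fin (n + 2) → ℝ} (ht : ∀ i, t i ∈ qLat q) (htmono : StrictMono t)
    (hsgn : ∀ i : Fin (n + 1), f (t i.castSucc) * f (t i.succ) < 0)
    {y : ℝ} (hy : y ∈ qLat q) (hty : t (Fin.last _) < y)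
    (hfy : |f y| < |f (t (Fin.last _))|) :
    HasSignChanges q (qDeriv q f) (n + 1) := by
  have hlast : f (t (Fin.last _)) ≠ 0 := abs_pos.mp ((abs_nonneg _).trans_lt hfy)
  refine hasSignChanges_qDeriv_of_increments hq0 hq1 (T := Fin.snoc t y)
    (σ := Fin.snoc (fun i => f (t i.succ)) (-f (t (Fin.last _)))) ?_ ?_ ?_ ?_
  · exact Fin.lastCases (by simp only [Fin.snoc_last, hy])
      (by simpa only [Fin.snoc_castSucc] using ht)
  · rw [← Fin.insertNth_last', Fin.strictMono_insertNth_iff]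
    refine ⟨htmono, fun i _ => (htmono.monotone (Fin.le_last i)).trans_lt hty, fun i hi => ?_⟩
    exact absurd hi (by simp only [Fin.last_le_iff, Fin.castSucc_ne_last, not_false_eq_true])
  · refine Fin.lastCases ?_ fun i => ?_
    · simpa using mul_self_pos.mpr hlast
    · rw [Fin.succ_castSucc]
      simpa only [Fin.snoc_castSucc, Fin.succ_castSucc] using hsgn i.succ
  · refine Fin.lastCases ?_ fun i => ?_
    · have hprod : f y * f (t (Fin.last _)) < f (t (Fin.last _)) * f (t (Fin.last _)) :=
        calc f y * f (t (Fin.last _)) ≤ |f y| * |f (t (Fin.last _))| := by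
              rw [← abs_mul]; exact le_abs_self _
          _ < |f (t (Fin.last _))| * |f (t (Fin.last _))| :=
              mul_lt_mul_of_pos_right hfy (abs_pos.mpr hlast)
          _ = f (t (Fin.last _)) * f (t (Fin.last _)) := abs_mul_abs_self _
      simp only [Fin.succ_last, Fin.snoc_last, Fin.snoc_castSucc]
      linarith
    · rw [Fin.succ_castSucc]
      simp only [Fin.snoc_castSucc]
      nlinarith [hsgn i, mul_self_nonneg (f (t i.succ))]

end

theorem sign_changes_qDeriv_of_vanishing_at_infinity (q : ℝ) (hq0 : 0 < q) (hq1 : q < 1)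
    (f : ℝ → ℝ) (hinf : Tendsto (fun n : ℕ => f (q ^ (-n : ℤ))) atTop (nhds 0)) :
    ∀ n : ℕ, HasSignChanges q f n → HasSignChanges q (qDeriv q f) n := by
  rintro (_ | n) ⟨t, ht, htmono, hsgn⟩
  · exact hasSignChanges_zero q _
  have hlast : f (t (Fin.last _)) ≠ 0 := right_ne_zero_of_mul (hsgn (Fin.last n)).ne
  obtain ⟨y, hy, hty, hfy⟩ :=
    exists_qLat_gt_abs_lt hq0 hq1 hinf (t (Fin.last _)) (abs_pos.mpr hlast)
  exact hasSignChanges_qDeriv_of_abs_lt hq0 hq1 ht htmono hsgn hy hty hfy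

end
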